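/- arXiv:2109.12528 — 8 statements merged into one kernel-verified Lean document; each statement's English description precedes it below -/
import Mathlib

section
/- If the set of nonzero principal convex subgroups of Γ, ordered by descending inclusion, is well-ordered, then every convex subgroup of Γ is principal. -/
/-- If the set of nonzero principal convex subgroups of `Γ`, ordered by descending
inclusion, is well-ordered (i.e. every nonempty family of them has a least element for
that ordering, which is a greatest element for inclusion), then every convex subgroup
of `Γ` is principal. -/
theorem stmt_3 {Γ : Type*} [AddCommGroup Γ] [LinearOrder Γ] [IsOrderedAddMonoid Γ]
    (princ : Γ → Set Γ)
    (hprinc : ∀ a : Γ, princ a = {b : Γ | ∃ n : ℕ, |b| ≤ n • |a|})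
    (hwo : ∀ T : Set (Set Γ), (∀ P ∈ T, ∃ a : Γ, a ≠ 0 ∧ P = princ a) → T.Nonempty →
      ∃ P ∈ T, ∀ Q ∈ T, Q ⊆ P)
    (H : AddSubgroup Γ) (hconv : ∀ h ∈ H, ∀ x : Γ, |x| ≤ |h| → x ∈ H) :
    ∃ a : Γ, (H : Set Γ) = princ a := by
  by_cases htriv : ∀ h ∈ H, h = 0
  · refine ⟨0, ?_⟩
    rw [hprinc]
    ext b
    simp only [Set.mem_setOf_eq, abs_zero, smul_zero, SetLike.mem_coe]
    constructor
    · intro hb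
      exact ⟨0, by simp [htriv b hb]⟩
    · rintro ⟨n, hn⟩
      have : b = 0 := abs_nonpos_iff.mp hn
      simp [this, H.zero_mem]
  · push_neg at htriv
    obtain ⟨c, hcH, hc0⟩ := htriv
    set T : Set (Set Γ) := {P | ∃ a : Γ, a ≠ 0 ∧ a ∈ H ∧ P = princ a} with hT
    obtain ⟨P, hPT, hPmax⟩ := hwo T (fun P hP => ⟨hP.choose, hP.choose_spec.1, hP.choose_spec.2.2⟩)
      ⟨princ c, c, hc0, hcH, rfl⟩
    obtain ⟨a, ha0, haH, rfl⟩ := hPT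
    refine ⟨a, ?_⟩
    have habs : |a| ∈ H := hconv a haH |a| (by rw [abs_abs])
    ext b
    simp only [SetLike.mem_coe, hprinc, Set.mem_setOf_eq]
    constructor
    · intro hb
      rcases eq_or_ne b 0 with rfl | hb0
      · exact ⟨0, by simp⟩
      · have : princ b ⊆ princ a := hPmax _ ⟨b, hb0, hb, rfl⟩
        have hbb : b ∈ princ b := by rw [hprinc]; exact ⟨1, by simp⟩
        have := this hbb
        rwa [hprinc] at this
    · rintro ⟨n, hn⟩
      have hsm : n • |a| ∈ H := AddSubgroup.nsmul_mem H habs n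
      refine hconv _ hsm b ?_
      rwa [abs_of_nonneg (nsmul_nonneg (abs_nonneg a) n)]
end

section
/- For a cut (D, E) in a totally ordered abelian group Γ, the set E − D = {e − d : e ∈ E, d ∈ D} equals the set of positive elements of Γ that do not lie in the invariance group H(D) = {h : D + h = D}. -/
/-- For a cut `(D, E)` in a totally ordered abelian group `Γ` (with `D, E` nonempty),
the set `E − D` equals the set of positive elements of `Γ` not lying in the invariance
group `H(D) = {h : D + h = D}`. -/
theorem stmt_8 {Γ : Type*} [AddCommGroup Γ] [LinearOrder Γ] [IsOrderedAddMonoid Γ] (D E : Set Γ)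
    (hD : D.Nonempty) (hE : E.Nonempty)
    (hDE : ∀ d ∈ D, ∀ e ∈ E, d < e) (hcov : D ∪ E = Set.univ) :
    {x : Γ | ∃ e ∈ E, ∃ d ∈ D, x = e - d} =
      {x : Γ | 0 < x ∧ (· + x) '' D ≠ D} := by
  have hmem : ∀ x : Γ, x ∈ D ∨ x ∈ E := by
    intro x
    have := hcov ▸ Set.mem_univ x
    exact this
  ext x
  simp only [Set.mem_setOf_eq]
  constructor
  · rintro ⟨e, he, d, hd, rfl⟩
    refine ⟨sub_pos.mpr (hDE d hd e he), ?_⟩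
    intro hEq
    have : d + (e - d) ∈ D := by
      rw [← hEq]; exact ⟨d, hd, rfl⟩
    have h2 : d + (e - d) < e := hDE _ this e he
    simp at h2
  · rintro ⟨hx, hne⟩
    by_contra hcon
    push_neg at hcon
    apply hne
    ext y
    constructor
    · rintro ⟨d, hd, rfl⟩
      rcases hmem (d + x) with h | h
      · exact h
      · exact (hcon (d + x) h d hd (by abel)).elim
    · intro hy
      have hlt : y - x < y := sub_lt_self y hx
      rcases hmem (y - x) with h | h
      · exact ⟨y - x, h, by simp⟩
      · exact absurd (hDE y hy _ h) (not_lt.mpr hlt.le)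
end

section
/- Let (D, E) be a cut in a totally ordered abelian group Γ, with invariance group H = H(D), and let H' be the intersection of all convex subgroups properly containing H. Then the final covariance group V_f(D) (the intersection over d ∈ D of the convex subgroup generated by {d' − d : d' ∈ D, d' ≥ d}) satisfies H ⊆ V_f(D) ⊆ H'. -/
/-- Let `(D, E)` be a cut in `Γ` with invariance group `H(D)`, and `H'` the intersection
of all convex subgroups properly containing `H(D)` (equal to `Γ` if there are none).
Then the final covariance group `V_f(D) = ⋂_{d ∈ D} V_f(d)`, where `V_f(d)` is the
convex subgroup generated by `{d' − d : d' ∈ D, d' ≥ d}`, satisfies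
`H(D) ⊆ V_f(D) ⊆ H'`. -/
theorem stmt_10 {Γ : Type*} [AddCommGroup Γ] [LinearOrder Γ] [IsOrderedAddMonoid Γ] (D E : Set Γ)
    (hD : D.Nonempty) (hE : E.Nonempty)
    (hDE : ∀ d ∈ D, ∀ e ∈ E, d < e) (hcov : D ∪ E = Set.univ)
    (HD : AddSubgroup Γ) (hHD : (HD : Set Γ) = {h : Γ | (· + h) '' D = D})
    (H' : AddSubgroup Γ)
    (hH' : H' = sInf {K : AddSubgroup Γ |
      (∀ h ∈ K, ∀ x : Γ, |x| ≤ |h| → x ∈ K) ∧ HD < K})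
    (Vf : Γ → AddSubgroup Γ)
    (hVf : ∀ d : Γ, Vf d = sInf {K : AddSubgroup Γ |
      (∀ h ∈ K, ∀ x : Γ, |x| ≤ |h| → x ∈ K) ∧
      {y : Γ | ∃ d' ∈ D, d ≤ d' ∧ y = d' - d} ⊆ K}) :
    (HD : Set Γ) ⊆ (⋂ d ∈ D, (Vf d : Set Γ)) ∧
      (⋂ d ∈ D, (Vf d : Set Γ)) ⊆ (H' : Set Γ) := by
  -- D is downward closed
  have hdown : ∀ x d : Γ, d ∈ D → x ≤ d → x ∈ D := by
    intro x d hd hxd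
    by_contra hx
    have hxE : x ∈ E := by
      have hx' : x ∈ D ∪ E := hcov ▸ Set.mem_univ x
      rcases hx' with h | h
      · exact absurd h hx
      · exact h
    exact absurd hxd (not_le.mpr (hDE d hd x hxE))
  have hmemHD : ∀ g : Γ, g ∈ HD → ∀ d ∈ D, d + g ∈ D := by
    intro g hg d hd
    have hset : (· + g) '' D = D := by
      have : g ∈ {h : Γ | (· + h) '' D = D} := hHD ▸ hg
      exact this
    rw [← hset]
    exact ⟨d, hd, rfl⟩
  constructor
  · intro h hh
    simp only [Set.mem_iInter, SetLike.mem_coe]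
    intro d hd
    rw [hVf, AddSubgroup.mem_sInf]
    rintro K ⟨hconv, hsub⟩
    have hh' : h ∈ HD := hh
    rcases le_or_gt 0 h with h0 | h0
    · exact hsub ⟨d + h, hmemHD h hh' d hd, le_add_of_nonneg_right h0,
        (add_sub_cancel_left d h).symm⟩
    · have hneg : (-h) ∈ HD := neg_mem hh'
      have hK : -h ∈ K := hsub ⟨d + (-h), hmemHD _ hneg d hd,
        le_add_of_nonneg_right (neg_nonneg.mpr h0.le), (add_sub_cancel_left d (-h)).symm⟩
      exact hconv _ hK h (by rw [abs_neg])
  · intro x hx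
    simp only [SetLike.mem_coe]
    rw [hH', AddSubgroup.mem_sInf]
    rintro K ⟨hconv, hlt⟩
    obtain ⟨k, hkK, hkHD⟩ := SetLike.exists_of_lt hlt
    set a := |k| with ha
    have haK : a ∈ K := hconv k hkK a (abs_abs k).le
    have haHD : a ∉ HD := by
      intro h
      rcases abs_choice k with h1 | h1
      · exact hkHD (h1 ▸ h)
      · exact hkHD (by rw [show k = -|k| by rw [h1, neg_neg]]; exact neg_mem h)
    have ha0 : 0 < a := by
      rcases (abs_nonneg k).lt_or_eq with h | h
      · exact h
      · exact absurd (by rw [ha, ← h]; exact zero_mem HD) haHD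
    -- find d ∈ D with d + a ∉ D
    have hexd : ∃ d ∈ D, d + a ∉ D := by
      by_contra hcon
      push_neg at hcon
      apply haHD
      rw [← SetLike.mem_coe, hHD]
      show (· + a) '' D = D
      apply Set.Subset.antisymm
      · rintro _ ⟨d, hd, rfl⟩
        exact hcon d hd
      · intro d hd
        exact ⟨d - a, hdown _ d hd (sub_le_self d ha0.le), sub_add_cancel d a⟩
    obtain ⟨d, hd, hda⟩ := hexd
    have hxVf : x ∈ Vf d := by
      have := Set.mem_iInter.mp hx d
      exact Set.mem_iInter.mp this hd
    rw [hVf, AddSubgroup.mem_sInf] at hxVf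
    apply hxVf K
    refine ⟨hconv, ?_⟩
    rintro y ⟨d', hd', hdd', rfl⟩
    have hlt' : d' - d < a := by
      by_contra hge
      push_neg at hge
      exact hda (hdown _ d' hd' (le_sub_iff_add_le'.mp hge))
    apply hconv a haK
    rw [abs_of_nonneg (sub_nonneg.mpr hdd'), abs_of_pos ha0]
    exact hlt'.le
end

section
/- Let Γ be a divisible totally ordered abelian group, H a convex subgroup, and consider the cut D with D^L = {d ∈ Γ : d ≤ h for some h ∈ H}. In the ordered group Γ(D) = ℤx ⊕ Γ where D^L < x < D^R, the convex subgroup generated by x intersects Γ exactly in H: H(x) ∩ Γ = H. -/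
/-- `ExtOrder DL DR le` says that `le` is a total group order on `Γ(D) = ℤx ⊕ Γ`
(elements `(m, b)` standing for `m·x + b`) extending the order of `Γ` and satisfying
`D^L < x < D^R`. -/
def ExtOrder {Γ : Type*} [AddCommGroup Γ] [LinearOrder Γ] [IsOrderedAddMonoid Γ] (DL DR : Set Γ)
    (le : (ℤ × Γ) → (ℤ × Γ) → Prop) : Prop :=
  (∀ u : ℤ × Γ, le u u) ∧
  (∀ u v w : ℤ × Γ, le u v → le v w → le u w) ∧
  (∀ u v : ℤ × Γ, le u v → le v u → u = v) ∧
  (∀ u v : ℤ × Γ, le u v ∨ le v u) ∧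
  (∀ u v w : ℤ × Γ, le u v → le (u + w) (v + w)) ∧
  (∀ a b : Γ, le (0, a) (0, b) ↔ a ≤ b) ∧
  (∀ d ∈ DL, le (0, d) (1, 0) ∧ ((0 : ℤ), d) ≠ ((1 : ℤ), (0 : Γ))) ∧
  (∀ e ∈ DR, le (1, 0) (0, e) ∧ ((1 : ℤ), (0 : Γ)) ≠ ((0 : ℤ), e))

/-- Let `Γ` be a divisible totally ordered abelian group, `H` a proper convex subgroup,
and `D` the cut with left set `H⁺ = {d : ∃ h ∈ H, d ≤ h}`. In `Γ(D) = ℤx ⊕ Γ`, the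
principal convex subgroup generated by `x` meets `Γ` exactly in `H`:
`H(x) ∩ Γ = H`, where `b ∈ H(x) ↔ ∃ n, −n·x ≤ b ≤ n·x`. -/
theorem stmt_13 {Γ : Type*} [AddCommGroup Γ] [LinearOrder Γ] [IsOrderedAddMonoid Γ]
    (hdiv : ∀ (g : Γ) (n : ℕ), n ≠ 0 → ∃ b : Γ, n • b = g)
    (H : AddSubgroup Γ) (hconv : ∀ h ∈ H, ∀ x : Γ, |x| ≤ |h| → x ∈ H) (hne : H ≠ ⊤)
    (DL : Set Γ) (hDL : DL = {d : Γ | ∃ h ∈ H, d ≤ h})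
    (le : (ℤ × Γ) → (ℤ × Γ) → Prop) (hle : ExtOrder DL DLᶜ le) :
    {b : Γ | ∃ n : ℕ, le (0, b) ((n : ℤ), 0) ∧ le (-(n : ℤ), 0) (0, b)} =
      (H : Set Γ) := by
  obtain ⟨hrefl, htrans, hanti, htot, hadd, hemb, hL, hR⟩ := hle
  -- negation antitone
  have hneg : ∀ u v : ℤ × Γ, le u v → le (-v) (-u) := by
    intro u v huv
    have := hadd u v (-u - v) huv
    have e1 : u + (-u - v) = -v := by abel
    have e2 : v + (-u - v) = -u := by abel
    rwa [e1, e2] at this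
  -- nsmul monotone
  have hsmul : ∀ (k : ℕ) (u v : ℤ × Γ), le u v → le (k • u) (k • v) := by
    intro k
    induction k with
    | zero => intro u v _; simpa using hrefl 0
    | succ k ih =>
      intro u v huv
      have h1 := hadd _ _ u (ih u v huv)
      have h2 := hadd _ _ (k • v) huv
      rw [succ_nsmul, succ_nsmul]
      refine htrans _ _ _ h1 ?_
      rw [add_comm u, add_comm v] at h2
      exact h2
  ext b
  simp only [Set.mem_setOf_eq, SetLike.mem_coe]
  constructor
  · rintro ⟨n, h1, h2⟩
    by_contra hb
    obtain ⟨c, hc⟩ := hdiv |b| (n + 1) (by omega)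
    have hcDL : c ∈ DLᶜ := by
      intro hcmem
      rw [hDL] at hcmem
      obtain ⟨h, hh, hch⟩ := hcmem
      apply hb
      refine hconv ((n + 1) • h) (AddSubgroup.nsmul_mem H hh _) b ?_
      calc |b| = (n + 1) • c := hc.symm
        _ ≤ (n + 1) • h := nsmul_le_nsmul_right hch _
        _ ≤ |(n + 1) • h| := le_abs_self _
    have hx := (hR c hcDL).1
    have hbig := hsmul (n + 1) _ _ hx
    have e1 : (n + 1) • ((1 : ℤ), (0 : Γ)) = (((n : ℤ) + 1), (0 : Γ)) := by
      simp [Prod.ext_iff]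
    have e2 : (n + 1) • (((0 : ℤ)), c) = (((0 : ℤ)), |b|) := by
      rw [← hc]; simp [Prod.ext_iff]
    rw [e1, e2] at hbig
    -- 0 ≤ x
    have h0DL : (0 : Γ) ∈ DL := by rw [hDL]; exact ⟨0, H.zero_mem, le_refl _⟩
    have hx0 := (hL 0 h0DL).1
    rcases abs_cases b with ⟨hab, _⟩ | ⟨hab, _⟩
    · rw [hab] at hbig
      -- (n+1, 0) ≤ (0, b) ≤ (n, 0) ≤ (n+1, 0)
      have step : le ((n : ℤ), 0) (((n : ℤ) + 1), 0) := by
        have := hadd _ _ ((n : ℤ), 0) hx0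
        simpa [add_comm] using this
      have := hanti _ _ (htrans _ _ _ h1 step) hbig
      rw [Prod.ext_iff] at this
      omega
    · rw [hab] at hbig
      have hbig' := hneg _ _ hbig
      have e3 : -(((0 : ℤ)), -b) = (((0 : ℤ)), b) := by simp
      have e4 : -((((n : ℤ) + 1)), (0 : Γ)) = ((-((n : ℤ) + 1)), (0 : Γ)) := by simp
      rw [e3, e4] at hbig'
      have step : le ((-((n : ℤ) + 1)), 0) ((-(n : ℤ)), 0) := by
        have := hadd _ _ ((-((n : ℤ) + 1)), 0) hx0
        simpa [add_comm] using this
      have := hanti _ _ hbig' (htrans _ _ _ step h2)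
      rw [Prod.ext_iff] at this
      omega
  · intro hb
    refine ⟨1, ?_, ?_⟩
    · have : b ∈ DL := by rw [hDL]; exact ⟨b, hb, le_refl _⟩
      simpa using (hL b this).1
    · have : -b ∈ DL := by rw [hDL]; exact ⟨-b, H.neg_mem hb, le_refl _⟩
      have := hneg _ _ (hL (-b) this).1
      simpa using this
end

section
/- Let Γ be a divisible totally ordered abelian group, D a cut in Γ with invariance group H = H(D), and let x ∈ Γ(D) be the element realizing D in the small extension Γ(D). Then x − a does not lie in the convex hull of H in Γ(D) for any a ∈ Γ. -/
/-- Let `D` be a cut in a divisible totally ordered abelian group `Γ`, with invariance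
group `H = H(D)`, and `x` the realizing element of the small extension `Γ(D) = ℤx ⊕ Γ`.
Then `x − a` does not lie in the convex hull of `H` in `Γ(D)`, for any `a ∈ Γ`: it lies
outside some convex subgroup of `Γ(D)` containing `H`. -/
theorem stmt_14 {Γ : Type*} [AddCommGroup Γ] [LinearOrder Γ] [IsOrderedAddMonoid Γ]
    (hdiv : ∀ (g : Γ) (n : ℕ), n ≠ 0 → ∃ b : Γ, n • b = g)
    (DL DR : Set Γ) (hDE : ∀ d ∈ DL, ∀ e ∈ DR, d < e) (hcov : DL ∪ DR = Set.univ)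
    (hL : DL.Nonempty) (hR : DR.Nonempty)
    (le : (ℤ × Γ) → (ℤ × Γ) → Prop) (hle : ExtOrder DL DR le)
    (HD : Set Γ) (hHD : HD = {h : Γ | (· + h) '' DL = DL}) :
    ∀ a : Γ, ¬ ∀ K : AddSubgroup (ℤ × Γ),
      (∀ y ∈ K, ∀ z : ℤ × Γ, le 0 z → le z y → z ∈ K) →
      (∀ h ∈ HD, ((0 : ℤ), h) ∈ K) →
      ((1 : ℤ), -a) ∈ K := by
  obtain ⟨hrefl, htrans, hanti, htot, hadd, hemb, hDLax, hDRax⟩ := hle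
  -- DL is downward closed
  have hdown : ∀ d ∈ DL, ∀ d' : Γ, d' ≤ d → d' ∈ DL := by
    intro d hd d' hd'
    have : d' ∈ DL ∪ DR := hcov ▸ Set.mem_univ d'
    rcases this with h | h
    · exact h
    · exact absurd hd' (not_le.mpr (hDE d hd d' h))
  -- H is convex
  have hHconv : ∀ h : Γ, (· + h) '' DL = DL → ∀ t : Γ, 0 ≤ t → t ≤ h →
      (· + t) '' DL = DL := by
    intro h hH t ht0 hth
    apply Set.Subset.antisymm
    · rintro _ ⟨d, hd, rfl⟩
      have hdh : d + h ∈ DL := by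
        rw [← hH]; exact ⟨d, hd, rfl⟩
      exact hdown (d + h) hdh (d + t) (add_le_add_right hth d)
    · intro d hd
      exact ⟨d - t, hdown d hd (d - t) (sub_le_self d ht0), sub_add_cancel d t⟩
  -- monotonicity of nsmul
  have hmono : ∀ (k : ℕ) (u v : ℤ × Γ), le u v → le (k • u) (k • v) := by
    intro k u v huv
    induction k with
    | zero => simpa using hrefl 0
    | succ k ih =>
      have h1 : le (k • u + u) (k • v + u) := hadd _ _ _ ih
      have h2 : le (k • v + u) (k • v + v) := by
        rw [add_comm (k • v) u, add_comm (k • v) v]; exact hadd _ _ _ huv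
      rw [succ_nsmul, succ_nsmul]
      exact htrans _ _ _ h1 h2
  -- x ≤ b from m x ≤ m b
  have hB : ∀ (m : ℕ), m ≠ 0 → ∀ g b : Γ, m • b = g →
      le (m • ((1:ℤ), (0:Γ))) ((0:ℤ), g) → le (1, 0) (0, b) := by
    intro m hm g b hb hle1
    rcases htot ((1:ℤ), (0:Γ)) (0, b) with h | h
    · exact h
    · have h2 : le (m • ((0:ℤ), b)) (m • ((1:ℤ), (0:Γ))) := hmono m _ _ h
      have h3 : m • ((0:ℤ), b) = ((0:ℤ), g) := by
        show ((m • (0:ℤ), m • b) : ℤ × Γ) = _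
        simp [hb]
      rw [h3] at h2
      have h4 : m • ((1:ℤ), (0:Γ)) = ((0:ℤ), g) := hanti _ _ hle1 h2
      have h5 : ((m:ℤ), (0:Γ)) = ((0:ℤ), g) := by
        rw [← h4]; show _ = ((m • (1:ℤ), m • (0:Γ)) : ℤ × Γ); simp
      have : (m:ℤ) = 0 := congrArg Prod.fst h5
      exact absurd (by exact_mod_cast this) hm
  have hB' : ∀ (m : ℕ), m ≠ 0 → ∀ g b : Γ, m • b = g →
      le ((0:ℤ), g) (m • ((1:ℤ), (0:Γ))) → le (0, b) (1, 0) := by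
    intro m hm g b hb hle1
    rcases htot ((0:ℤ), b) ((1:ℤ), (0:Γ)) with h | h
    · exact h
    · have h2 : le (m • ((1:ℤ), (0:Γ))) (m • ((0:ℤ), b)) := hmono m _ _ h
      have h3 : m • ((0:ℤ), b) = ((0:ℤ), g) := by
        show ((m • (0:ℤ), m • b) : ℤ × Γ) = _
        simp [hb]
      rw [h3] at h2
      have h4 : m • ((1:ℤ), (0:Γ)) = ((0:ℤ), g) := hanti _ _ h2 hle1
      have h5 : ((m:ℤ), (0:Γ)) = ((0:ℤ), g) := by
        rw [← h4]; show _ = ((m • (1:ℤ), m • (0:Γ)) : ℤ × Γ); simp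
      have : (m:ℤ) = 0 := congrArg Prod.fst h5
      exact absurd (by exact_mod_cast this) hm
  -- membership in DR / DL from comparison with x
  have hinDR : ∀ b : Γ, le (1, 0) (0, b) → b ∈ DR := by
    intro b h
    have : b ∈ DL ∪ DR := hcov ▸ Set.mem_univ b
    rcases this with hb | hb
    · exact absurd (hanti _ _ (hDLax b hb).1 h).symm
        (by simpa using (hDLax b hb).2)
    · exact hb
  have hinDL : ∀ b : Γ, le (0, b) (1, 0) → b ∈ DL := by
    intro b h
    have : b ∈ DL ∪ DR := hcov ▸ Set.mem_univ b
    rcases this with hb | hb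
    · exact hb
    · exact absurd (hanti _ _ (hDRax b hb).1 h) (hDRax b hb).2
  -- final contradiction lemma
  have hfin : ∀ (m : ℕ), m ≠ 0 → ∀ (h b b' : Γ), (· + h) '' DL = DL →
      b ∈ DR → b' ∈ DL → m • (b - b') = h → False := by
    intro m hm h b b' hH hb hb' hmh
    have hlt : b' < b := hDE b' hb' b hb
    have ht0 : (0:Γ) ≤ b - b' := sub_nonneg.mpr hlt.le
    have hth : b - b' ≤ h := by
      rw [← hmh]
      calc b - b' = 1 • (b - b') := (one_nsmul _).symm
        _ ≤ m • (b - b') := nsmul_le_nsmul_left ht0 (Nat.one_le_iff_ne_zero.mpr hm)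
    have htH : (· + (b - b')) '' DL = DL := hHconv h hH _ ht0 hth
    have : b ∈ DL := by
      rw [← htH]; exact ⟨b', hb', add_sub_cancel b' b⟩
    exact absurd (hDE b this b hb) (lt_irrefl b)
  intro a hall
  -- the convex subgroup K
  set Hs : Set Γ := {h : Γ | (· + h) '' DL = DL} with hHs
  have hzero : (0:Γ) ∈ Hs := by simp [hHs]
  have haddH : ∀ h₁ h₂, h₁ ∈ Hs → h₂ ∈ Hs → h₁ + h₂ ∈ Hs := by
    intro h₁ h₂ hh₁ hh₂
    have h3 : (· + h₂) '' ((· + h₁) '' DL) = DL := by rw [hh₁]; exact hh₂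
    rw [Set.image_image] at h3
    have hf : (fun x : Γ => x + h₁ + h₂) = fun x => x + (h₁ + h₂) :=
      funext fun x => add_assoc x h₁ h₂
    rw [hf] at h3
    exact h3
  have hnegH : ∀ h, h ∈ Hs → -h ∈ Hs := by
    intro h hh
    have h3 : (fun x : Γ => x + -h) '' DL = (fun x : Γ => x + -h) '' ((fun x => x + h) '' DL) := by
      rw [hh]
    rw [Set.image_image] at h3
    have hf : (fun x : Γ => x + h + -h) = fun x : Γ => x :=
      funext fun x => add_neg_cancel_right x h
    rw [hf, Set.image_id'] at h3
    exact h3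
  let K : AddSubgroup (ℤ × Γ) :=
    { carrier := {p : ℤ × Γ | p.1 = 0 ∧ p.2 ∈ Hs}
      zero_mem' := ⟨rfl, hzero⟩
      add_mem' := by
        rintro p q ⟨hp1, hp2⟩ ⟨hq1, hq2⟩
        exact ⟨by simp [Prod.fst_add, hp1, hq1], haddH _ _ hp2 hq2⟩
      neg_mem' := by
        rintro p ⟨hp1, hp2⟩
        exact ⟨by simp [hp1], hnegH _ hp2⟩ }
  have hconvK : ∀ y ∈ K, ∀ z : ℤ × Γ, le 0 z → le z y → z ∈ K := by
    rintro y ⟨hy1, hy2⟩ z h0z hzy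
    obtain ⟨n, c⟩ := z
    set h := y.2 with hh
    have hyeq : y = ((0:ℤ), h) := Prod.ext hy1 rfl
    rw [hyeq] at hzy
    have hHh : (· + h) '' DL = DL := hy2
    rcases lt_trichotomy n 0 with hn | hn | hn
    · -- n < 0
      set m : ℕ := (-n).toNat with hmdef
      have hm : m ≠ 0 := by omega
      have hmn : (m : ℤ) = -n := by omega
      have hx : m • ((1:ℤ), (0:Γ)) = ((-n : ℤ), (0:Γ)) := by
        show ((m • (1:ℤ), m • (0:Γ)) : ℤ × Γ) = _; simp [hmn]
      -- from 0 ≤ z : m x ≤ c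
      have h1 : le (((0:ℤ),(0:Γ)) + ((-n : ℤ), (0:Γ))) ((n, c) + ((-n:ℤ), (0:Γ))) :=
        hadd _ _ _ h0z
      have h1' : le (m • ((1:ℤ),(0:Γ))) ((0:ℤ), c) := by
        rw [hx]
        convert h1 using 2 <;> simp [Prod.ext_iff]
      obtain ⟨b, hbdef⟩ := hdiv c m hm
      have hxb := hB m hm c b hbdef h1'
      have hbDR := hinDR b hxb
      -- from z ≤ y : c - h ≤ m x
      have h2 : le ((n, c) + ((-n:ℤ), -h)) (((0:ℤ), h) + ((-n:ℤ), -h)) :=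
        hadd _ _ _ hzy
      have h2' : le ((0:ℤ), c - h) (m • ((1:ℤ),(0:Γ))) := by
        rw [hx]
        convert h2 using 2 <;> simp [Prod.ext_iff, sub_eq_add_neg]
      obtain ⟨b', hb'def⟩ := hdiv (c - h) m hm
      have hb'x := hB' m hm (c - h) b' hb'def h2'
      have hb'DL := hinDL b' hb'x
      have : m • (b - b') = h := by
        rw [smul_sub, hbdef, hb'def]; abel
      exact absurd (hfin m hm h b b' hHh hbDR hb'DL this) not_false
    · -- n = 0
      subst hn
      have h0c : (0:Γ) ≤ c := by
        have := h0z
        have : le ((0:ℤ), (0:Γ)) ((0:ℤ), c) := by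
          convert h0z using 2 <;> rfl
        exact (hemb 0 c).mp this
      have hch : c ≤ h := (hemb c h).mp hzy
      exact ⟨rfl, hHconv h hHh c h0c hch⟩
    · -- n > 0
      set m : ℕ := n.toNat with hmdef
      have hm : m ≠ 0 := by omega
      have hmn : (m : ℤ) = n := by omega
      have hx : m • ((1:ℤ), (0:Γ)) = ((n : ℤ), (0:Γ)) := by
        show ((m • (1:ℤ), m • (0:Γ)) : ℤ × Γ) = _; simp [hmn]
      -- from z ≤ y : m x ≤ h - c
      have h1 : le ((n, c) + ((0:ℤ), -c)) (((0:ℤ), h) + ((0:ℤ), -c)) :=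
        hadd _ _ _ hzy
      have h1' : le (m • ((1:ℤ),(0:Γ))) ((0:ℤ), h - c) := by
        rw [hx]
        convert h1 using 2 <;> simp [Prod.ext_iff, sub_eq_add_neg]
      obtain ⟨b, hbdef⟩ := hdiv (h - c) m hm
      have hxb := hB m hm (h - c) b hbdef h1'
      have hbDR := hinDR b hxb
      -- from 0 ≤ z : -c ≤ m x
      have h2 : le (((0:ℤ),(0:Γ)) + ((0:ℤ), -c)) ((n, c) + ((0:ℤ), -c)) :=
        hadd _ _ _ h0z
      have h2' : le ((0:ℤ), -c) (m • ((1:ℤ),(0:Γ))) := by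
        rw [hx]
        convert h2 using 2 <;> simp [Prod.ext_iff]
      obtain ⟨b', hb'def⟩ := hdiv (-c) m hm
      have hb'x := hB' m hm (-c) b' hb'def h2'
      have hb'DL := hinDL b' hb'x
      have : m • (b - b') = h := by
        rw [smul_sub, hbdef, hb'def]; abel
      exact absurd (hfin m hm h b b' hHh hbDR hb'DL this) not_false
  have hcont : ∀ h ∈ HD, ((0:ℤ), h) ∈ K := by
    intro h hh
    exact ⟨rfl, by rw [hHD] at hh; exact hh⟩
  have := hall K hconvK hcont
  exact absurd this.1 one_ne_zero
end

section
/- Let Γ be a totally ordered abelian group with a fixed embedding in a lexicographic product ℝ^I (Hahn-type embedding), and let H_S = {x ∈ ℝ^I : x_i = 0 for all i ∈ S} for an initial segment S of I. For x in ℝ^I but not in the divisible hull Γ_ℚ ⊆ ℝ^I, the set of all y ∈ ℝ^I with D_y = D_x (where D_x is the cut of Γ_ℚ determined by x) equals the coset x + H, where H is the convex subgroup of ℝ^I generated by the invariance group of D_x in Γ_ℚ. -/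
/-- Hahn-product setting: `W` is the set of functions `I → ℝ` with well-founded
(well-ordered) support, lexicographically ordered by `lt`. `Γℚ ⊆ W` is a ℚ-subspace
containing all truncations of its elements and all finitely supported rational vectors.
For `x ∈ W \ Γℚ`, the set of all `y ∈ W \ Γℚ` determining the same cut of `Γℚ` as `x`
equals the coset `x + H`, where `H` is the convex subgroup of `W` generated by the
invariance group of the cut `D_x` in `Γℚ`. -/
theorem stmt_17 {I : Type*} [LinearOrder I]
    (W : Set (I → ℝ)) (hW : W = {f : I → ℝ | {i : I | f i ≠ 0}.IsWF})
    (lt : (I → ℝ) → (I → ℝ) → Prop)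
    (hlt : ∀ f g : I → ℝ, lt f g ↔ ∃ i : I, (∀ j : I, j < i → f j = g j) ∧ f i < g i)
    (Γℚ : Set (I → ℝ)) (hsub : Γℚ ⊆ W)
    (h0 : (0 : I → ℝ) ∈ Γℚ)
    (hadd : ∀ f ∈ Γℚ, ∀ g ∈ Γℚ, f + g ∈ Γℚ)
    (hneg : ∀ f ∈ Γℚ, -f ∈ Γℚ)
    (hsmul : ∀ q : ℚ, ∀ f ∈ Γℚ, (q : ℝ) • f ∈ Γℚ)
    (htrunc : ∀ f ∈ Γℚ, ∀ S : Set I, IsLowerSet S → S.indicator f ∈ Γℚ)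
    (hfin : ∀ f : I → ℝ, {i : I | f i ≠ 0}.Finite → (∀ i : I, ∃ q : ℚ, f i = (q : ℝ)) →
      f ∈ Γℚ)
    (x : I → ℝ) (hx : x ∈ W) (hxn : x ∉ Γℚ)
    (HD : Set (I → ℝ))
    (hHD : HD = {h : I → ℝ | h ∈ Γℚ ∧
      (· + h) '' {a : I → ℝ | a ∈ Γℚ ∧ lt a x} = {a : I → ℝ | a ∈ Γℚ ∧ lt a x}})
    (H : Set (I → ℝ))
    (hH : H = ⋂₀ {K : Set (I → ℝ) | K ⊆ W ∧ (0 : I → ℝ) ∈ K ∧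
      (∀ u ∈ K, ∀ v ∈ K, u + v ∈ K) ∧ (∀ u ∈ K, -u ∈ K) ∧
      (∀ u ∈ K, ∀ v ∈ W, (lt 0 v ∨ v = 0) → (lt v u ∨ v = u) → v ∈ K) ∧ HD ⊆ K}) :
    {y : I → ℝ | y ∈ W ∧ y ∉ Γℚ ∧
        {a : I → ℝ | a ∈ Γℚ ∧ lt a y} = {a : I → ℝ | a ∈ Γℚ ∧ lt a x}} =
      (x + ·) '' H := by
  subst hW hHD hH
  -- asymmetry of lt
  have asymm : ∀ f g : I → ℝ, lt f g → lt g f → False := by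
    intro f g h1 h2
    obtain ⟨i, hia, hib⟩ := (hlt f g).1 h1
    obtain ⟨k, hka, hkb⟩ := (hlt g f).1 h2
    rcases lt_trichotomy i k with h | h | h
    · rw [hka i h] at hib; exact lt_irrefl _ hib
    · subst h; exact lt_irrefl _ (hib.trans hkb)
    · rw [hia k h] at hkb; exact lt_irrefl _ hkb
  -- support closure lemmas
  have wf_add : ∀ f g : I → ℝ, {i : I | f i ≠ 0}.IsWF → {i : I | g i ≠ 0}.IsWF →
      {i : I | (f + g) i ≠ 0}.IsWF := by
    intro f g hf hg
    refine (hf.union hg).mono ?_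
    intro i hi
    simp only [Set.mem_setOf_eq, Set.mem_union] at hi ⊢
    by_contra h
    push_neg at h
    exact hi (by simp [Pi.add_apply, h.1, h.2])
  have wf_neg : ∀ f : I → ℝ, {i : I | f i ≠ 0}.IsWF → {i : I | (-f) i ≠ 0}.IsWF := by
    intro f hf
    refine hf.mono ?_
    intro i hi
    simp only [Set.mem_setOf_eq, Pi.neg_apply, neg_ne_zero] at hi ⊢
    exact hi
  have wf_sub : ∀ f g : I → ℝ, {i : I | f i ≠ 0}.IsWF → {i : I | g i ≠ 0}.IsWF →
      {i : I | (f - g) i ≠ 0}.IsWF := by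
    intro f g hf hg
    have := wf_add f (-g) hf (wf_neg g hg)
    refine this.mono ?_
    intro i hi
    simp only [Set.mem_setOf_eq, Pi.sub_apply, Pi.add_apply, Pi.neg_apply] at hi ⊢
    intro h; exact hi (by linarith [h])
  -- minimal support element
  have minsupp : ∀ v : I → ℝ, {i : I | v i ≠ 0}.IsWF → v ≠ 0 →
      ∃ k : I, v k ≠ 0 ∧ ∀ j : I, j < k → v j = 0 := by
    intro v hv hne
    have hn : {i : I | v i ≠ 0}.Nonempty := by
      by_contra h
      push_neg at h
      apply hne
      funext i
      exact not_not.1 (Set.eq_empty_iff_forall_notMem.1 h i)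
    refine ⟨hv.min hn, hv.min_mem hn, ?_⟩
    intro j hj
    by_contra hj0
    exact hv.not_lt_min hn hj0 hj
  -- trichotomy for W elements
  have trich : ∀ v : I → ℝ, {i : I | v i ≠ 0}.IsWF → v ≠ 0 → lt 0 v ∨ lt v 0 := by
    intro v hv hne
    obtain ⟨k, hk, hmin⟩ := minsupp v hv hne
    rcases hk.lt_or_gt with h | h
    · right
      exact (hlt v 0).2 ⟨k, fun j hj => by simp [hmin j hj], by simpa using h⟩
    · left
      exact (hlt 0 v).2 ⟨k, fun j hj => by simp [hmin j hj], by simpa using h⟩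
  have ltneg : ∀ v : I → ℝ, lt v 0 → lt 0 (-v) := by
    intro v hv
    obtain ⟨k, h1, h2⟩ := (hlt v 0).1 hv
    refine (hlt 0 (-v)).2 ⟨k, fun j hj => by simp [h1 j hj], ?_⟩
    simp only [Pi.zero_apply] at h2 ⊢
    simp only [Pi.neg_apply]
    linarith
  -- the cut-level predicate
  set C : I → Prop := fun k => ({j : I | j < k}.indicator x ∈ Γℚ) with hCdef
  have lower : ∀ k : I, IsLowerSet {i : I | i < k} := by
    intro k a b hba ha
    exact lt_of_le_of_lt hba ha
  have Cmono : ∀ j k : I, j ≤ k → C k → C j := by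
    intro j k hjk hk
    have h2 := htrunc _ hk {i : I | i < j} (lower j)
    have heq : {i : I | i < j}.indicator ({i : I | i < k}.indicator x)
        = {i : I | i < j}.indicator x := by
      funext i
      by_cases hij : i < j
      · simp [Set.indicator_apply, Set.mem_setOf_eq, hij, lt_of_lt_of_le hij hjk]
      · simp [Set.indicator_apply, Set.mem_setOf_eq, hij]
    rw [heq] at h2
    exact h2
  have agree_below : ∀ a ∈ Γℚ, ∀ i : I, (∀ j : I, j < i → a j = x j) → C i := by
    intro a ha i hagree
    have h2 := htrunc a ha {j : I | j < i} (lower i)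
    have heq : {j : I | j < i}.indicator a = {j : I | j < i}.indicator x := by
      funext m
      by_cases hm : m < i
      · simp [Set.indicator_apply, Set.mem_setOf_eq, hm, hagree m hm]
      · simp [Set.indicator_apply, Set.mem_setOf_eq, hm]
    rw [heq] at h2
    exact h2
  -- rational single vectors
  have single_mem : ∀ (k : I) (q : ℚ), (fun j : I => if j = k then (q : ℝ) else 0) ∈ Γℚ := by
    intro k q
    apply hfin
    · refine Set.Finite.subset (Set.finite_singleton k) ?_
      intro i hi
      simp only [Set.mem_setOf_eq] at hi
      simp only [Set.mem_singleton_iff]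
      by_contra h
      simp [h] at hi
    · intro i
      by_cases h : i = k
      · exact ⟨q, by simp [h]⟩
      · exact ⟨0, by simp [h]⟩
  -- approximations from below
  have approx : ∀ k : I, C k → ∀ q : ℚ, ∃ a : I → ℝ, a ∈ Γℚ ∧
      (∀ j : I, j < k → a j = x j) ∧ a k = (q : ℝ) := by
    intro k hk q
    refine ⟨{j : I | j < k}.indicator x + (fun j : I => if j = k then (q : ℝ) else 0),
      hadd _ hk _ (single_mem k q), ?_, ?_⟩
    · intro j hj
      simp [Set.indicator_apply, Set.mem_setOf_eq, hj, ne_of_lt hj]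
    · simp [Set.indicator_apply, Set.mem_setOf_eq]
  -- the candidate convex subgroup
  set Hs : Set (I → ℝ) := {v : I → ℝ | {i : I | v i ≠ 0}.IsWF ∧ ∀ k : I, C k → v k = 0}
    with hHsdef
  -- minimum of the "bad" part of the support
  have badmin : ∀ v : I → ℝ, {i : I | v i ≠ 0}.IsWF → ∀ k0 : I, C k0 → v k0 ≠ 0 →
      ∃ k : I, v k ≠ 0 ∧ C k ∧ ∀ j : I, j < k → v j = 0 := by
    intro v hv k0 hC0 hv0
    set s : Set I := {j : I | v j ≠ 0 ∧ C j} with hsdef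
    have hswf : s.IsWF := hv.mono (fun j hj => hj.1)
    have hn : s.Nonempty := ⟨k0, hv0, hC0⟩
    refine ⟨hswf.min hn, (hswf.min_mem hn).1, (hswf.min_mem hn).2, ?_⟩
    intro j hj
    by_contra hj0
    have hCj : C j := Cmono j _ hj.le (hswf.min_mem hn).2
    exact hswf.not_lt_min hn ⟨hj0, hCj⟩ hj
  -- Hs is a member of the defining family for H
  have Hs_mem : Hs ∈ {K : Set (I → ℝ) | K ⊆ {f : I → ℝ | {i : I | f i ≠ 0}.IsWF} ∧
      (0 : I → ℝ) ∈ K ∧ (∀ u ∈ K, ∀ v ∈ K, u + v ∈ K) ∧ (∀ u ∈ K, -u ∈ K) ∧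
      (∀ u ∈ K, ∀ v ∈ {f : I → ℝ | {i : I | f i ≠ 0}.IsWF},
        (lt 0 v ∨ v = 0) → (lt v u ∨ v = u) → v ∈ K) ∧
      {h : I → ℝ | h ∈ Γℚ ∧ (· + h) '' {a : I → ℝ | a ∈ Γℚ ∧ lt a x}
        = {a : I → ℝ | a ∈ Γℚ ∧ lt a x}} ⊆ K} := by
    refine ⟨fun v hv => hv.1, ⟨by
      have he : {i : I | (0 : I → ℝ) i ≠ 0} = ∅ := by ext i; simp
      rw [he]; exact Set.isWF_empty, fun k _ => rfl⟩, ?_, ?_, ?_, ?_⟩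
    · intro u hu v hv
      exact ⟨wf_add u v hu.1 hv.1, fun k hk => by
        simp [Pi.add_apply, hu.2 k hk, hv.2 k hk]⟩
    · intro u hu
      exact ⟨wf_neg u hu.1, fun k hk => by simp [Pi.neg_apply, hu.2 k hk]⟩
    · -- convexity
      intro u hu v hvW hpos hle
      refine ⟨hvW, ?_⟩
      intro k hk
      by_contra hvk
      have hv0 : lt 0 v := by
        rcases hpos with h | h
        · exact h
        · rw [h] at hvk; exact (hvk rfl).elim
      obtain ⟨i, hi1, hi2⟩ := (hlt 0 v).1 hv0
      simp only [Pi.zero_apply] at hi1 hi2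
      rcases hle with h | h
      · obtain ⟨m, hm1, hm2⟩ := (hlt v u).1 h
        by_cases hCm : C m
        · have hum : u m = 0 := hu.2 m hCm
          have hvm : v m < 0 := by rw [hum] at hm2; exact hm2
          have hvj : ∀ j : I, j < m → v j = 0 := fun j hj =>
            (hm1 j hj).trans (hu.2 j (Cmono j m hj.le hCm))
          rcases lt_trichotomy i m with h' | h' | h'
          · rw [hvj i h'] at hi2; exact lt_irrefl _ hi2
          · subst h'; exact lt_irrefl _ (hi2.trans hvm)
          · rw [← hi1 m h'] at hvm; exact lt_irrefl _ hvm
        · have hkm : k < m := by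
            by_contra h'
            push_neg at h'
            exact hCm (Cmono m k h' hk)
          exact hvk ((hm1 k hkm).trans (hu.2 k hk))
      · rw [h] at hvk
        exact hvk (hu.2 k hk)
    · -- HD ⊆ Hs
      rintro h ⟨hhG, hhinv⟩
      have hhW : {i : I | h i ≠ 0}.IsWF := hsub hhG
      refine ⟨hhW, ?_⟩
      intro k0 hC0
      by_contra hk0
      obtain ⟨k, hk, hCk, hmin⟩ := badmin h hhW k0 hC0 hk0
      have hLadd : ∀ a : I → ℝ, a ∈ Γℚ → lt a x → (a + h ∈ Γℚ ∧ lt (a + h) x) := by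
        intro a ha hax
        have : a + h ∈ {a : I → ℝ | a ∈ Γℚ ∧ lt a x} := by
          rw [← hhinv]
          exact ⟨a, ⟨ha, hax⟩, rfl⟩
        exact this
      have hLsub : ∀ a : I → ℝ, a ∈ Γℚ → lt a x → (a - h ∈ Γℚ ∧ lt (a - h) x) := by
        intro a ha hax
        have h2 : a ∈ (· + h) '' {a : I → ℝ | a ∈ Γℚ ∧ lt a x} := by
          rw [hhinv]; exact ⟨ha, hax⟩
        obtain ⟨a', ha', heq⟩ := h2
        have heq' : a' + h = a := heq
        have : a - h = a' := (eq_sub_of_add_eq heq').symm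
        rw [this]
        exact ha'
      rcases hk.lt_or_gt with hneg' | hpos'
      · -- h k < 0 : use a - h
        obtain ⟨q, hq1, hq2⟩ := exists_rat_btwn (show x k + h k < x k by linarith)
        obtain ⟨a, haG, ha1, ha2⟩ := approx k hCk q
        have haL : lt a x := (hlt a x).2 ⟨k, ha1, by rw [ha2]; exact hq2⟩
        have h3 := hLsub a haG haL
        have h4 : lt x (a - h) := by
          refine (hlt x (a - h)).2 ⟨k, ?_, ?_⟩
          · intro j hj
            simp [Pi.sub_apply, ha1 j hj, hmin j hj]
          · simp only [Pi.sub_apply, ha2]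
            linarith
        exact asymm _ _ h3.2 h4
      · -- h k > 0 : use a + h
        obtain ⟨q, hq1, hq2⟩ := exists_rat_btwn (show x k - h k < x k by linarith)
        obtain ⟨a, haG, ha1, ha2⟩ := approx k hCk q
        have haL : lt a x := (hlt a x).2 ⟨k, ha1, by rw [ha2]; exact hq2⟩
        have h3 := hLadd a haG haL
        have h4 : lt x (a + h) := by
          refine (hlt x (a + h)).2 ⟨k, ?_, ?_⟩
          · intro j hj
            simp [Pi.add_apply, ha1 j hj, hmin j hj]
          · simp only [Pi.add_apply, ha2]
            linarith
        exact asymm _ _ h3.2 h4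
  -- Hs is contained in every member of the family
  have pos_case : ∀ v : I → ℝ, v ∈ Hs → lt 0 v →
      ∀ K : Set (I → ℝ), (K ⊆ {f : I → ℝ | {i : I | f i ≠ 0}.IsWF} ∧
      (0 : I → ℝ) ∈ K ∧ (∀ u ∈ K, ∀ v ∈ K, u + v ∈ K) ∧ (∀ u ∈ K, -u ∈ K) ∧
      (∀ u ∈ K, ∀ v ∈ {f : I → ℝ | {i : I | f i ≠ 0}.IsWF},
        (lt 0 v ∨ v = 0) → (lt v u ∨ v = u) → v ∈ K) ∧
      {h : I → ℝ | h ∈ Γℚ ∧ (· + h) '' {a : I → ℝ | a ∈ Γℚ ∧ lt a x}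
        = {a : I → ℝ | a ∈ Γℚ ∧ lt a x}} ⊆ K) → v ∈ K := by
    intro v hv hv0 K hK
    obtain ⟨hKW, hK0, hKadd, hKneg, hKcvx, hKHD⟩ := hK
    obtain ⟨k, hk1, hk2⟩ := (hlt 0 v).1 hv0
    simp only [Pi.zero_apply] at hk1 hk2
    have hCk : ¬ C k := fun h => hk2.ne' (hv.2 k h)
    obtain ⟨q, hq⟩ := exists_rat_gt (v k)
    set u : I → ℝ := fun j : I => if j = k then (q : ℝ) else 0 with hudef
    have huq : u ∈ Γℚ := single_mem k q
    have hwitness : ∀ a : I → ℝ, a ∈ Γℚ → lt a x →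
        ∃ m : I, m < k ∧ (∀ j : I, j < m → a j = x j) ∧ a m < x m := by
      intro a ha hax
      obtain ⟨m, hm1, hm2⟩ := (hlt a x).1 hax
      refine ⟨m, ?_, hm1, hm2⟩
      by_contra h'
      push_neg at h'
      exact hCk (agree_below a ha k (fun j hj => hm1 j (lt_of_lt_of_le hj h')))
    have huHD : u ∈ {h : I → ℝ | h ∈ Γℚ ∧ (· + h) '' {a : I → ℝ | a ∈ Γℚ ∧ lt a x}
        = {a : I → ℝ | a ∈ Γℚ ∧ lt a x}} := by
      refine ⟨huq, ?_⟩
      ext a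
      constructor
      · rintro ⟨a', ⟨ha'G, ha'x⟩, rfl⟩
        refine ⟨hadd _ ha'G _ huq, ?_⟩
        obtain ⟨m, hmk, hm1, hm2⟩ := hwitness a' ha'G ha'x
        refine (hlt _ x).2 ⟨m, ?_, ?_⟩
        · intro j hj
          have : u j = 0 := by simp [hudef, (hj.trans hmk).ne]
          simp [Pi.add_apply, this, hm1 j hj]
        · have : u m = 0 := by simp [hudef, hmk.ne]
          simp [Pi.add_apply, this, hm2]
      · rintro ⟨haG, hax⟩
        refine ⟨a - u, ⟨hadd _ haG _ (hneg _ huq), ?_⟩, by exact sub_add_cancel a u⟩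
        obtain ⟨m, hmk, hm1, hm2⟩ := hwitness a haG hax
        refine (hlt _ x).2 ⟨m, ?_, ?_⟩
        · intro j hj
          have : u j = 0 := by simp [hudef, (hj.trans hmk).ne]
          simp [Pi.sub_apply, Pi.add_apply, Pi.neg_apply, this, hm1 j hj]
        · have : u m = 0 := by simp [hudef, hmk.ne]
          simp [Pi.sub_apply, Pi.add_apply, Pi.neg_apply, this, hm2]
    have huK : u ∈ K := hKHD huHD
    refine hKcvx u huK v hv.1 (Or.inl hv0) (Or.inl ?_)
    refine (hlt v u).2 ⟨k, ?_, ?_⟩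
    · intro j hj
      simp [hudef, hj.ne, hk1 j hj]
    · simp [hudef, hq]
  have Hs_sub : ∀ v ∈ Hs, ∀ K ∈ {K : Set (I → ℝ) |
      K ⊆ {f : I → ℝ | {i : I | f i ≠ 0}.IsWF} ∧
      (0 : I → ℝ) ∈ K ∧ (∀ u ∈ K, ∀ v ∈ K, u + v ∈ K) ∧ (∀ u ∈ K, -u ∈ K) ∧
      (∀ u ∈ K, ∀ v ∈ {f : I → ℝ | {i : I | f i ≠ 0}.IsWF},
        (lt 0 v ∨ v = 0) → (lt v u ∨ v = u) → v ∈ K) ∧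
      {h : I → ℝ | h ∈ Γℚ ∧ (· + h) '' {a : I → ℝ | a ∈ Γℚ ∧ lt a x}
        = {a : I → ℝ | a ∈ Γℚ ∧ lt a x}} ⊆ K}, v ∈ K := by
    intro v hv K hK
    by_cases hv0 : v = 0
    · rw [hv0]; exact hK.2.1
    rcases trich v hv.1 hv0 with h | h
    · exact pos_case v hv h K hK
    · have hnegHs : -v ∈ Hs := ⟨wf_neg v hv.1, fun k hk => by
        simp [Pi.neg_apply, hv.2 k hk]⟩
      have := pos_case (-v) hnegHs (ltneg v h) K hK
      have h2 := hK.2.2.2.1 _ this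
      rw [neg_neg] at h2
      exact h2
  -- main set equality
  ext y
  simp only [Set.mem_setOf_eq, Set.mem_image]
  constructor
  · rintro ⟨hyW, hyG, hcut⟩
    refine ⟨y - x, ?_, by abel⟩
    have hcut' : ∀ a : I → ℝ, (a ∈ Γℚ ∧ lt a y) ↔ (a ∈ Γℚ ∧ lt a x) := by
      intro a
      exact Set.ext_iff.1 hcut a
    apply Set.mem_sInter.2
    intro K hK
    refine Hs_sub (y - x) ?_ K hK
    have hyx : {i : I | (y - x) i ≠ 0}.IsWF := wf_sub y x hyW hx
    refine ⟨hyx, ?_⟩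
    intro k0 hC0
    by_contra hk0
    obtain ⟨k, hk, hCk, hmin⟩ := badmin (y - x) hyx k0 hC0 hk0
    simp only [Pi.sub_apply] at hk
    have hagree : ∀ j : I, j < k → y j = x j := by
      intro j hj
      have := hmin j hj
      simp only [Pi.sub_apply] at this
      linarith
    have hk' : y k ≠ x k := fun h => hk (by rw [h]; ring)
    rcases hk'.lt_or_gt with hlt' | hgt'
    · -- y k < x k : pick q between, a < x but a > y
      obtain ⟨q, hq1, hq2⟩ := exists_rat_btwn hlt'
      obtain ⟨a, haG, ha1, ha2⟩ := approx k hCk q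
      have hax : lt a x := (hlt a x).2 ⟨k, ha1, by rw [ha2]; exact hq2⟩
      have hay : lt a y := ((hcut' a).2 ⟨haG, hax⟩).2
      have hya : lt y a := (hlt y a).2 ⟨k, fun j hj => (hagree j hj).trans (ha1 j hj).symm,
        by rw [ha2]; exact hq1⟩
      exact asymm _ _ hay hya
    · -- x k < y k : pick q between, a < y but a > x
      obtain ⟨q, hq1, hq2⟩ := exists_rat_btwn hgt'
      obtain ⟨a, haG, ha1, ha2⟩ := approx k hCk q
      have hay : lt a y := (hlt a y).2 ⟨k, fun j hj => (ha1 j hj).trans (hagree j hj).symm,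
        by rw [ha2]; exact hq2⟩
      have hax : lt a x := ((hcut' a).1 ⟨haG, hay⟩).2
      have hxa : lt x a := (hlt x a).2 ⟨k, fun j hj => (ha1 j hj).symm,
        by rw [ha2]; exact hq1⟩
      exact asymm _ _ hax hxa
  · rintro ⟨v, hvH, rfl⟩
    have hvHs : v ∈ Hs := Set.sInter_subset_of_mem Hs_mem hvH
    have hvW : {i : I | v i ≠ 0}.IsWF := hvHs.1
    by_cases hv0 : v = 0
    · subst hv0
      rw [add_zero x]
      exact ⟨hx, hxn, rfl⟩
    obtain ⟨k, hk, hmin⟩ := minsupp v hvW hv0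
    have hCk : ¬ C k := fun h => hk (hvHs.2 k h)
    have hagree : ∀ j : I, j < k → (x + v) j = x j := by
      intro j hj
      simp [Pi.add_apply, hmin j hj]
    refine ⟨wf_add x v hx hvW, ?_, ?_⟩
    · -- x + v ∉ Γℚ
      intro hmem
      exact hCk (agree_below (x + v) hmem k hagree)
    · -- the two cuts agree
      ext a
      simp only [Set.mem_setOf_eq]
      constructor
      · rintro ⟨haG, hay⟩
        refine ⟨haG, ?_⟩
        obtain ⟨m, hm1, hm2⟩ := (hlt a (x + v)).1 hay
        have hmk : m < k := by
          by_contra h'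
          push_neg at h'
          exact hCk (agree_below a haG k
            (fun j hj => ((hm1 j (lt_of_lt_of_le hj h')).trans (hagree j hj))))
        refine (hlt a x).2 ⟨m, ?_, ?_⟩
        · intro j hj
          exact (hm1 j hj).trans (hagree j (hj.trans hmk))
        · rw [← hagree m hmk]
          exact hm2
      · rintro ⟨haG, hax⟩
        refine ⟨haG, ?_⟩
        obtain ⟨m, hm1, hm2⟩ := (hlt a x).1 hax
        have hmk : m < k := by
          by_contra h'
          push_neg at h'
          exact hCk (agree_below a haG k (fun j hj => hm1 j (lt_of_lt_of_le hj h')))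
        refine (hlt a (x + v)).2 ⟨m, ?_, ?_⟩
        · intro j hj
          exact (hm1 j hj).trans (hagree j (hj.trans hmk)).symm
        · rw [hagree m hmk]
          exact hm2
end

section
/- Let Γ_ℚ be a divisible totally ordered abelian group and let D = (a + H)^+ be the ball cut with left set {d : d ≤ a + h for some h ∈ H}, where H is a convex subgroup. Then the invariance group of D equals H. -/
/-- Let `Γ` be a divisible totally ordered abelian group, `H` a convex subgroup and
`D = (a + H)⁺` the ball cut with left set `{d : ∃ h ∈ H, d ≤ a + h}`. Then the
invariance group of `D` equals `H`. -/
theorem stmt_18 {Γ : Type*} [AddCommGroup Γ] [LinearOrder Γ] [IsOrderedAddMonoid Γ]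
    (hdiv : ∀ (g : Γ) (n : ℕ), n ≠ 0 → ∃ b : Γ, n • b = g)
    (a : Γ) (H : AddSubgroup Γ) (hconv : ∀ h ∈ H, ∀ x : Γ, |x| ≤ |h| → x ∈ H)
    (DL : Set Γ) (hDL : DL = {d : Γ | ∃ h ∈ H, d ≤ a + h}) :
    {h : Γ | (· + h) '' DL = DL} = (H : Set Γ) := by
  subst hDL
  ext h
  simp only [Set.mem_setOf_eq, SetLike.mem_coe]
  constructor
  · intro him
    have haL : a ∈ {d : Γ | ∃ h ∈ H, d ≤ a + h} := ⟨0, H.zero_mem, by simp⟩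
    rcases le_or_gt 0 h with hp | hn
    · -- a + h ∈ DL
      have : a + h ∈ {d : Γ | ∃ h ∈ H, d ≤ a + h} := by
        rw [← him]; exact ⟨a, haL, rfl⟩
      obtain ⟨h', hh', hle⟩ := this
      have : h ≤ h' := le_of_add_le_add_left hle
      exact hconv h' hh' h (by rw [abs_of_nonneg hp]; exact this.trans (le_abs_self h'))
    · -- a ∈ image, so a - h ∈ DL
      have : a ∈ (· + h) '' {d : Γ | ∃ h ∈ H, d ≤ a + h} := by rw [him]; exact haL
      obtain ⟨d, ⟨h', hh', hle⟩, hdh⟩ := this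
      have hd : d = a - h := eq_sub_of_add_eq hdh
      have hle' : -h ≤ h' := by
        rw [hd, sub_eq_add_neg] at hle; exact le_of_add_le_add_left hle
      have : h ∈ H := hconv h' hh' h (by
        rw [abs_of_neg hn]; exact hle'.trans (le_abs_self h'))
      exact this
  · intro hH
    ext d
    simp only [Set.mem_image, Set.mem_setOf_eq]
    constructor
    · rintro ⟨x, ⟨h', hh', hle⟩, rfl⟩
      exact ⟨h' + h, H.add_mem hh' hH, by rw [← add_assoc]; exact add_le_add_left hle h⟩
    · rintro ⟨h', hh', hle⟩
      exact ⟨d - h, ⟨h' - h, H.sub_mem hh' hH, by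
        rw [sub_eq_add_neg, sub_eq_add_neg, ← add_assoc]
        exact add_le_add_left hle _⟩, sub_add_cancel d h⟩
end

section
/- Let Γ_ℚ be a divisible totally ordered abelian group, H a proper convex subgroup, and D = H^+ the ball cut with left set H^+ = {d : d ≤ h for some h ∈ H}. If H has an immediate successor H' in the chain of convex subgroups which is principal, generated as a convex subgroup by a positive element a, then the sequence (a/n)_{n∈ℕ} (using divisibility) is coinitial in the right set D^R; consequently the coinitiality λ(D) of the cut equals ℵ₀. -/
/-- Let `Γ` be a divisible totally ordered abelian group, `H` a proper convex subgroup
with an immediate successor `H'` in the chain of convex subgroups, where `H'` is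
principal, generated as a convex subgroup by a positive element `a ∉ H`. For the ball
cut `D = H⁺` with right set `D^R = Γ \ H⁺`, any sequence `(b n)` with `n • b n = a`
is coinitial in `D^R`; consequently the coinitiality of `D` is `ℵ₀`: `D^R` has a
countable coinitial subset but no finite coinitial subset. -/
theorem stmt_19 {Γ : Type*} [AddCommGroup Γ] [LinearOrder Γ] [IsOrderedAddMonoid Γ]
    (hdiv : ∀ (g : Γ) (n : ℕ), n ≠ 0 → ∃ b : Γ, n • b = g)
    (H : AddSubgroup Γ) (hconv : ∀ h ∈ H, ∀ x : Γ, |x| ≤ |h| → x ∈ H) (hne : H ≠ ⊤)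
    (H' : AddSubgroup Γ) (hconv' : ∀ h ∈ H', ∀ x : Γ, |x| ≤ |h| → x ∈ H')
    (hlt : H < H')
    (hsucc : ∀ K : AddSubgroup Γ, (∀ h ∈ K, ∀ x : Γ, |x| ≤ |h| → x ∈ K) → H < K →
      H' ≤ K)
    (a : Γ) (ha : 0 < a) (haH : a ∉ H)
    (hgen : (H' : Set Γ) = {y : Γ | ∃ n : ℕ, |y| ≤ n • a})
    (DR : Set Γ) (hDR : DR = {d : Γ | ¬ ∃ h ∈ H, d ≤ h})
    (b : ℕ → Γ) (hb : ∀ n : ℕ, n ≠ 0 → n • b n = a) :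
    ((∀ n : ℕ, n ≠ 0 → b n ∈ DR) ∧ (∀ e ∈ DR, ∃ n : ℕ, n ≠ 0 ∧ b n ≤ e)) ∧
    (∃ T : Set Γ, T ⊆ DR ∧ T.Countable ∧ ∀ e ∈ DR, ∃ t ∈ T, t ≤ e) ∧
    (∀ T : Set Γ, T ⊆ DR → (∀ e ∈ DR, ∃ t ∈ T, t ≤ e) → T.Infinite) := by
  -- positivity of b n
  have hbpos : ∀ n : ℕ, n ≠ 0 → 0 < b n := by
    intro n hn
    by_contra hle
    push_neg at hle
    have : n • b n ≤ n • (0 : Γ) := nsmul_le_nsmul_right hle n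
    rw [hb n hn, smul_zero] at this
    exact absurd (lt_of_lt_of_le ha this) (lt_irrefl 0)
  -- b n ∈ DR
  have hbDR : ∀ n : ℕ, n ≠ 0 → b n ∈ DR := by
    intro n hn
    rw [hDR]
    rintro ⟨h, hh, hle⟩
    have habs : |b n| ≤ |h| := by
      rw [abs_of_pos (hbpos n hn), abs_of_pos (lt_of_lt_of_le (hbpos n hn) hle)]
      exact hle
    have hbH : b n ∈ H := hconv h hh _ habs
    have : n • b n ∈ H := AddSubgroup.nsmul_mem H hbH n
    rw [hb n hn] at this
    exact haH this
  -- coinitiality of (b n)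
  have hcoin : ∀ e ∈ DR, ∃ n : ℕ, n ≠ 0 ∧ b n ≤ e := by
    intro e he
    rw [hDR] at he
    -- e > every element of H; e > 0
    have hegt : ∀ h ∈ H, h < e := by
      intro h hh
      by_contra hle
      push_neg at hle
      exact he ⟨h, hh, hle⟩
    have hepos : 0 < e := hegt 0 H.zero_mem
    -- convex subgroup generated by e
    set K : AddSubgroup Γ :=
      { carrier := {x : Γ | ∃ n : ℕ, |x| ≤ n • e}
        zero_mem' := ⟨0, by simp⟩
        add_mem' := by
          rintro x y ⟨m, hm⟩ ⟨k, hk⟩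
          exact ⟨m + k, (abs_add_le x y).trans (by rw [add_nsmul]; exact add_le_add hm hk)⟩
        neg_mem' := by
          rintro x ⟨m, hm⟩
          exact ⟨m, by rwa [abs_neg]⟩ } with hK
    have hKconv : ∀ h ∈ K, ∀ x : Γ, |x| ≤ |h| → x ∈ K := by
      rintro h ⟨m, hm⟩ x hx
      exact ⟨m, hx.trans hm⟩
    have hHK : H < K := by
      constructor
      · intro h hh
        refine ⟨1, ?_⟩
        rw [one_nsmul]
        rcases abs_cases h with ⟨heq, _⟩ | ⟨heq, _⟩
        · rw [heq]; exact (hegt h hh).le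
        · rw [heq]; exact (hegt (-h) (H.neg_mem hh)).le
      · intro hKH
        have heK : e ∈ K := ⟨1, by rw [one_nsmul]; exact (abs_of_pos hepos).le⟩
        have heH : e ∈ H := hKH heK
        exact absurd (hegt e heH) (lt_irrefl e)
    have haK : a ∈ K := hsucc K hKconv hHK (by
      have : a ∈ (H' : Set Γ) := by rw [hgen]; exact ⟨1, by rw [one_nsmul]; exact (abs_of_pos ha).le⟩
      exact this)
    obtain ⟨m, hm⟩ := haK
    rw [abs_of_pos ha] at hm
    have hm0 : m ≠ 0 := by
      rintro rfl
      rw [zero_nsmul] at hm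
      exact absurd (lt_of_lt_of_le ha hm) (lt_irrefl 0)
    refine ⟨m, hm0, ?_⟩
    have : m • b m ≤ m • e := by rw [hb m hm0]; exact hm
    by_contra hlt'
    push_neg at hlt'
    exact absurd (nsmul_lt_nsmul_right hm0 hlt') (not_lt.mpr this)
  refine ⟨⟨hbDR, hcoin⟩, ?_, ?_⟩
  · refine ⟨b '' {n | n ≠ 0}, ?_, Set.Countable.image (Set.to_countable _) b, ?_⟩
    · rintro x ⟨n, hn, rfl⟩; exact hbDR n hn
    · intro e he
      obtain ⟨n, hn, hle⟩ := hcoin e he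
      exact ⟨b n, ⟨n, hn, rfl⟩, hle⟩
  · intro T hTDR hTcoin
    by_contra hinf
    rw [Set.not_infinite] at hinf
    have hTfin := hinf
    -- T is nonempty since DR is nonempty (a ∈ DR)
    have haDR : a ∈ DR := by
      rw [hDR]
      rintro ⟨h, hh, hle⟩
      have : a ∈ H := hconv h hh a (by rw [abs_of_pos ha, abs_of_pos (lt_of_lt_of_le ha hle)]; exact hle)
      exact haH this
    obtain ⟨t0, ht0T, hle0⟩ := hTcoin a haDR
    have hTne : T.Nonempty := ⟨t0, ht0T⟩
    obtain ⟨m0, hm0T, hm0min⟩ : ∃ m0 ∈ T, ∀ t ∈ T, id t ≤ id m0 → id m0 = id t := by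
      obtain ⟨i, hi1, hi2⟩ := Set.Finite.exists_minimalFor id T hTfin hTne
      exact ⟨i, hi1, fun t ht h => le_antisymm (hi2 ht h) h⟩
    -- min element m0 ∈ DR, find b n ≤ m0, then b (2n) < b n ≤ m0
    obtain ⟨n, hn, hbn⟩ := hcoin m0 (hTDR hm0T)
    have h2n : (2 * n) ≠ 0 := by positivity
    have hhalf : b (2 * n) < b n := by
      have key : n • (2 • b (2 * n)) = n • b n := by
        rw [hb n hn, ← hb (2 * n) h2n, smul_smul, mul_comm]
      have h2 : 2 • b (2 * n) = b n := by
        have := (nsmul_right_strictMono hn).injective key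
        exact this
      calc b (2 * n) < 2 • b (2 * n) := by
            rw [two_nsmul]; exact lt_add_of_pos_left _ (hbpos _ h2n)
        _ = b n := h2
    obtain ⟨t, htT, htle⟩ := hTcoin (b (2 * n)) (hbDR _ h2n)
    have : m0 ≤ t := by
      by_contra hlt'
      push_neg at hlt'
      exact absurd (hm0min t htT hlt'.le) (by simp [hlt'.ne'])
    exact absurd (this.trans htle) (not_le.mpr (lt_of_lt_of_le hhalf hbn))
end
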